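/- In the decoding setup with a uniform message (p_m = 1/|M| for all m), let δ ≥ 0 and let 𝓓 be a quantum channel from operators on C⊗E′ to operators on N such that ‖(id_{RM} ⊗ 𝓓)(τ^{RMCE′}) − |σ⟩⟨σ|^{RMN}‖₁ ≤ δ. For each message m define τ_m = 𝓓( Tr_D[ (U⊗I_{E′})(|ψ_m⟩⟨ψ_m|^N ⊗ |ω⟩⟨ω|^{EE′})(U⊗I_{E′})ᴴ ] ) (the partial trace keeping C⊗E′) and the decoding probabilities p(m′|m) = ⟨ψ_{m′}| τ_m |ψ_{m′}⟩. Then the average probability of incorrectly decoding the message satisfies (1/|M|)·∑_m ∑_{m′ ≠ m} p(m′|m) ≤ δ/2. -/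

import Mathlib

open scoped BigOperators Kronecker Classical ComplexOrder
open Matrix MeasureTheory

noncomputable section

/-- Outer product `|v⟩⟨v|`. -/
def outer {A : Type*} [Fintype A] (v : A → ℂ) : Matrix A A ℂ :=
  Matrix.of fun i j => v i * star (v j)

/-- Trace norm `‖X‖₁ = Tr √(XᴴX)`. -/
def traceNorm {A : Type*} [Fintype A] [DecidableEq A] (X : Matrix A A ℂ) : ℝ :=
  (((Matrix.posSemidef_conjTranspose_mul_self X).1.eigenvectorUnitary : Matrix A A ℂ) *
    Matrix.diagonal (((↑) : ℝ → ℂ) ∘ (√·) ∘ (Matrix.posSemidef_conjTranspose_mul_self X).1.eigenvalues) *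
    (star (Matrix.posSemidef_conjTranspose_mul_self X).1.eigenvectorUnitary : Matrix A A ℂ)).trace.re

/-- Frobenius norm `‖X‖₂`. -/
def frobNorm {A : Type*} [Fintype A] (X : Matrix A A ℂ) : ℝ :=
  Real.sqrt ((Xᴴ * X).trace.re)

/-- Operator norm (largest singular value) `‖X‖_∞`. -/
def opNorm {A : Type*} [Fintype A] [DecidableEq A] (X : Matrix A A ℂ) : ℝ :=
  ‖Matrix.toEuclideanCLM (𝕜 := ℂ) X‖

instance matrixMeasurableSpace {m n : Type*} : MeasurableSpace (Matrix m n ℂ) :=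
  inferInstanceAs (MeasurableSpace (m → n → ℂ))

/-- A measurement superoperator (given by its POVM elements `Ms`) applied to the second
factor of a bipartite operator, tensored with the identity on the first factor `W`. -/
def measApply {W A X : Type*} [Fintype A] [DecidableEq X]
    (Ms : X → Matrix A A ℂ) (ρ : Matrix (W × A) (W × A) ℂ) :
    Matrix (W × X) (W × X) ℂ :=
  Matrix.of fun p q =>
    if p.2 = q.2 then ∑ a : A, ∑ a' : A, Ms p.2 a a' * ρ (p.1, a') (q.1, a) else 0

/-- A measurement superoperator applied to an operator (no side register). -/
def measApply0 {A X : Type*} [Fintype A] [DecidableEq X]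
    (Ms : X → Matrix A A ℂ) (ρ : Matrix A A ℂ) : Matrix X X ℂ :=
  Matrix.of fun i j => if i = j then ∑ a : A, ∑ a' : A, Ms i a a' * ρ a' a else 0

/-- The elements `Ms` form a POVM: each is positive semidefinite and they sum to `I`. -/
def IsPOVM {A X : Type*} [Fintype A] [Fintype X] [DecidableEq A]
    (Ms : X → Matrix A A ℂ) : Prop :=
  (∀ i, (Ms i).PosSemidef) ∧ ∑ i, Ms i = 1

/-- The tuple of unit vectors `χ` defines an `(s,η)`-quasi-measurement:
`(|A|/s) ∑ᵢ |χᵢ⟩⟨χᵢ| ≤ η I`. -/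
def IsQuasiTuple {A : Type*} [Fintype A] [DecidableEq A] (s : ℕ) (η : ℝ)
    (χ : Fin s → A → ℂ) : Prop :=
  (∀ i, ∑ a, Complex.normSq (χ i a) = 1) ∧
  ((η : ℂ) • (1 : Matrix A A ℂ) -
    ((Fintype.card A : ℂ) / (s : ℂ)) • ∑ i, outer (χ i)).PosSemidef

/-- The kernel elements `(|A|/s)|χᵢ⟩⟨χᵢ|` of an `(s,η)`-quasi-measurement. -/
def quasiKernel {A : Type*} [Fintype A] (s : ℕ) (χ : Fin s → A → ℂ) :
    Fin s → Matrix A A ℂ :=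
  fun i => ((Fintype.card A : ℂ) / (s : ℂ)) • outer (χ i)

/-- Choi matrix of a superoperator `Φ`. -/
def choiMat {A B : Type*} [Fintype A] [DecidableEq A]
    (Φ : Matrix A A ℂ →ₗ[ℂ] Matrix B B ℂ) : Matrix (A × B) (A × B) ℂ :=
  Matrix.of fun p q => Φ (Matrix.single p.1 q.1 1) p.2 q.2

/-- `Φ` is a quantum channel: completely positive (PSD Choi matrix) and trace-preserving. -/
def IsCPTP {A B : Type*} [Fintype A] [DecidableEq A] [Fintype B]
    (Φ : Matrix A A ℂ →ₗ[ℂ] Matrix B B ℂ) : Prop :=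
  (choiMat Φ).PosSemidef ∧ ∀ X, (Φ X).trace = X.trace

/-- `(id_W ⊗ Φ)(ρ)`: apply a superoperator to the second tensor factor. -/
def applyRight {W A B : Type*} (Φ : Matrix A A ℂ →ₗ[ℂ] Matrix B B ℂ)
    (ρ : Matrix (W × A) (W × A) ℂ) : Matrix (W × B) (W × B) ℂ :=
  Matrix.of fun p q => Φ (Matrix.of fun u v => ρ (p.1, u) (q.1, v)) p.2 q.2

/-- The global pure state `(I_{RM} ⊗ U ⊗ I_{E'})(|σ⟩^{RMN} ⊗ |ω⟩^{EE'})` of the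
decoding setup, as a vector on `R⊗M⊗(C⊗D)⊗E'`. -/
def decVec (dM dC dD dE dE' : ℕ) (p : Fin dM → ℝ) (ψ : Fin dM → Fin dM → ℂ)
    (ω : Fin dE × Fin dE' → ℂ)
    (U : Matrix (Fin dC × Fin dD) (Fin dM × Fin dE) ℂ) :
    (Fin dM × Fin dM) × ((Fin dC × Fin dD) × Fin dE') → ℂ :=
  fun q => (if q.1.1 = q.1.2 then (Real.sqrt (p q.1.2) : ℂ) else 0) *
    ∑ n : Fin dM, ∑ e : Fin dE, U q.2.1 (n, e) * ψ q.1.2 n * ω (e, q.2.2)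

/-- `τ^{RMD}`. -/
def tauRMD (dM dC dD dE dE' : ℕ) (p : Fin dM → ℝ) (ψ : Fin dM → Fin dM → ℂ)
    (ω : Fin dE × Fin dE' → ℂ) (U : Matrix (Fin dC × Fin dD) (Fin dM × Fin dE) ℂ) :
    Matrix ((Fin dM × Fin dM) × Fin dD) ((Fin dM × Fin dM) × Fin dD) ℂ :=
  Matrix.of fun x y => ∑ c : Fin dC, ∑ f : Fin dE',
    decVec dM dC dD dE dE' p ψ ω U (x.1, ((c, x.2), f)) *
      star (decVec dM dC dD dE dE' p ψ ω U (y.1, ((c, y.2), f)))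

/-- `τ^D`. -/
def tauD (dM dC dD dE dE' : ℕ) (p : Fin dM → ℝ) (ψ : Fin dM → Fin dM → ℂ)
    (ω : Fin dE × Fin dE' → ℂ) (U : Matrix (Fin dC × Fin dD) (Fin dM × Fin dE) ℂ) :
    Matrix (Fin dD) (Fin dD) ℂ :=
  Matrix.of fun d d' => ∑ x : Fin dM × Fin dM, ∑ c : Fin dC, ∑ f : Fin dE',
    decVec dM dC dD dE dE' p ψ ω U (x, ((c, d), f)) *
      star (decVec dM dC dD dE dE' p ψ ω U (x, ((c, d'), f)))

/-- `τ^{RMCE'}`. -/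
def tauRMCE' (dM dC dD dE dE' : ℕ) (p : Fin dM → ℝ) (ψ : Fin dM → Fin dM → ℂ)
    (ω : Fin dE × Fin dE' → ℂ) (U : Matrix (Fin dC × Fin dD) (Fin dM × Fin dE) ℂ) :
    Matrix ((Fin dM × Fin dM) × (Fin dC × Fin dE'))
      ((Fin dM × Fin dM) × (Fin dC × Fin dE')) ℂ :=
  Matrix.of fun x y => ∑ d : Fin dD,
    decVec dM dC dD dE dE' p ψ ω U (x.1, ((x.2.1, d), x.2.2)) *
      star (decVec dM dC dD dE dE' p ψ ω U (y.1, ((y.2.1, d), y.2.2)))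

/-- The purified message vector `|σ⟩^{RMN} = ∑ₘ √pₘ |m⟩|m⟩|ψₘ⟩`. -/
def sigmaVec (dM : ℕ) (p : Fin dM → ℝ) (ψ : Fin dM → Fin dM → ℂ) :
    (Fin dM × Fin dM) × Fin dM → ℂ :=
  fun q => (if q.1.1 = q.1.2 then (Real.sqrt (p q.1.2) : ℂ) else 0) * ψ q.1.2 q.2

/-- `σ^{RM} = Tr_N |σ⟩⟨σ|^{RMN}`. -/
def sigmaRM (dM : ℕ) (p : Fin dM → ℝ) (ψ : Fin dM → Fin dM → ℂ) :
    Matrix (Fin dM × Fin dM) (Fin dM × Fin dM) ℂ :=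
  Matrix.of fun x y => ∑ n : Fin dM, sigmaVec dM p ψ (x, n) * star (sigmaVec dM p ψ (y, n))

/-- The encoded state of message `m`, as a vector on `(C⊗D)⊗E'`. -/
def msgVec (dM dC dD dE dE' : ℕ) (ψ : Fin dM → Fin dM → ℂ)
    (ω : Fin dE × Fin dE' → ℂ) (U : Matrix (Fin dC × Fin dD) (Fin dM × Fin dE) ℂ)
    (m : Fin dM) : (Fin dC × Fin dD) × Fin dE' → ℂ :=
  fun q => ∑ n : Fin dM, ∑ e : Fin dE, U q.1 (n, e) * ψ m n * ω (e, q.2)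

/-- `Tr_D[(U⊗I)(|ψₘ⟩⟨ψₘ| ⊗ |ω⟩⟨ω|)(U⊗I)ᴴ]` on `C⊗E'`. -/
def msgCE' (dM dC dD dE dE' : ℕ) (ψ : Fin dM → Fin dM → ℂ)
    (ω : Fin dE × Fin dE' → ℂ) (U : Matrix (Fin dC × Fin dD) (Fin dM × Fin dE) ℂ)
    (m : Fin dM) : Matrix (Fin dC × Fin dE') (Fin dC × Fin dE') ℂ :=
  Matrix.of fun x y => ∑ d : Fin dD,
    msgVec dM dC dD dE dE' ψ ω U m ((x.1, d), x.2) *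
      star (msgVec dM dC dD dE dE' ψ ω U m ((y.1, d), y.2))

/-!
Let `Y = (id ⊗ 𝓓)(τ) - |σ⟩⟨σ|` and let `P` be the projector onto the span of the vectors
`|m⟩|m⟩|ψ_{m'}⟩` with `m' ≠ m`. These vectors are orthogonal to `|σ⟩`, and the `|m⟩|m⟩`-block of
`τ` is `p_m` times the encoded state of `m`, so `Tr(PY)` is exactly the average error probability
`∑ₘ pₘ ∑_{m' ≠ m} p(m'|m)`. Since `0 ≤ P ≤ I`, `Tr(PY)` is at most the sum of the positive
eigenvalues of `Y`, which is `‖Y‖₁ / 2` because `Y` is Hermitian and traceless.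
-/

lemma Matrix.PosSemidef.re_diag_nonneg {A : Type*} {M : Matrix A A ℂ} (hM : M.PosSemidef)
    (i : A) : 0 ≤ (M i i).re :=
  (Complex.le_def.mp hM.diag_nonneg).1

section LinearAlgebra

variable {A : Type*} [Fintype A]

lemma outer_eq_vecMulVec (v : A → ℂ) : outer v = vecMulVec v (star v) := rfl

lemma outer_posSemidef (v : A → ℂ) : (outer v).PosSemidef :=
  posSemidef_vecMulVec_self_star v

lemma trace_outer_mul (v : A → ℂ) (ρ : Matrix A A ℂ) :
    (outer v * ρ).trace = star v ⬝ᵥ ρ *ᵥ v := by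
  rw [outer_eq_vecMulVec, vecMulVec_mul, trace_vecMulVec, dotProduct_comm, dotProduct_mulVec]

lemma star_dotProduct_outer_mulVec (u v : A → ℂ) :
    star u ⬝ᵥ outer v *ᵥ u = (star u ⬝ᵥ v) * (star v ⬝ᵥ u) := by
  rw [dotProduct_mulVec, outer_eq_vecMulVec, vecMul_vecMulVec, smul_dotProduct, smul_eq_mul]

lemma sum_outer_mul_self {ι : Type*} [DecidableEq ι] (s : Finset ι) (v : ι → A → ℂ)
    (hv : ∀ i ∈ s, ∀ j ∈ s, star (v i) ⬝ᵥ v j = if i = j then 1 else 0) :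
    (∑ i ∈ s, outer (v i)) * (∑ i ∈ s, outer (v i)) = ∑ i ∈ s, outer (v i) := by
  simp_rw [Finset.sum_mul, Finset.mul_sum, outer_eq_vecMulVec, vecMulVec_mul_vecMulVec]
  refine Finset.sum_congr rfl fun i hi => ?_
  rw [Finset.sum_eq_single_of_mem i hi fun j hj hji => by
      rw [hv i hi j hj, if_neg hji.symm, zero_smul, vecMulVec_zero],
    hv i hi i hi, if_pos rfl, one_smul]

lemma posSemidef_one_sub_of_mul_self_eq [DecidableEq A] {P : Matrix A A ℂ}
    (hP : P.IsHermitian) (hPP : P * P = P) : (1 - P).PosSemidef := by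
  have h : (1 - P)ᴴ * (1 - P) = 1 - P := by
    rw [conjTranspose_sub, conjTranspose_one, hP.eq, Matrix.mul_sub, Matrix.sub_mul,
      Matrix.sub_mul, Matrix.one_mul, Matrix.mul_one, hPP, Matrix.one_mul, sub_self, sub_zero]
  exact h ▸ posSemidef_conjTranspose_mul_self _

lemma star_dotProduct_self_eq_sum_normSq (v : A → ℂ) :
    star v ⬝ᵥ v = ∑ a, (Complex.normSq (v a) : ℂ) := by
  simp only [dotProduct, Pi.star_apply, Complex.normSq_eq_conj_mul_self, Complex.star_def]

lemma star_mulVec_dotProduct_mulVec {α β : Type*} [Fintype α] [Fintype β] [DecidableEq β]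
    {U : Matrix α β ℂ} (hU : Uᴴ * U = 1) (u : β → ℂ) :
    star (U *ᵥ u) ⬝ᵥ U *ᵥ u = star u ⬝ᵥ u := by
  rw [star_mulVec, dotProduct_mulVec, vecMul_vecMul, hU, vecMul_one]

end LinearAlgebra

section TraceNorm

variable {n : Type*} [Fintype n] [DecidableEq n]

open Unitary in
lemma traceNorm_eq_re_trace_of_mul_self_eq {X S : Matrix n n ℂ} (hS : S.PosSemidef)
    (hSX : S * S = Xᴴ * X) : traceNorm X = S.trace.re := by
  have hXX := posSemidef_conjTranspose_mul_self X
  have hS_sqrt : S = (hXX.1.eigenvectorUnitary : Matrix n n ℂ) *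
      diagonal (((↑) : ℝ → ℂ) ∘ (√·) ∘ hXX.1.eigenvalues) *
      (star hXX.1.eigenvectorUnitary : Matrix n n ℂ) := by
    open scoped MatrixOrder in
    rw [← CFC.sqrt_unique (a := Xᴴ * X) (b := S) hSX (nonneg_iff_posSemidef.mpr hS),
      CFC.sqrt_eq_real_sqrt _ (nonneg_iff_posSemidef.mpr hXX), cfcₙ_eq_cfc (hf0 := Real.sqrt_zero),
      hXX.1.cfc_eq, IsHermitian.cfc, conjStarAlgAut_apply]
    rfl
  rw [traceNorm, ← hS_sqrt]

open Unitary in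
lemma Matrix.IsHermitian.traceNorm_eq_sum_abs_eigenvalues {X : Matrix n n ℂ}
    (hX : X.IsHermitian) : traceNorm X = ∑ i, |hX.eigenvalues i| := by
  let S := conjStarAlgAut ℂ (Matrix n n ℂ) hX.eigenvectorUnitary
    (diagonal fun i => ((|hX.eigenvalues i| : ℝ) : ℂ))
  have hS : S.PosSemidef := by
    rw [show S = _ from conjStarAlgAut_apply _ _]
    exact (PosSemidef.diagonal fun i => by simp).mul_mul_conjTranspose_same _
  have hSS : S * S = Xᴴ * X := by
    conv_rhs => rw [hX.eq, hX.spectral_theorem]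
    simp only [S, ← map_mul, diagonal_mul_diagonal, Function.comp_apply, ← Complex.ofReal_mul,
      abs_mul_abs_self]
    rfl
  rw [traceNorm_eq_re_trace_of_mul_self_eq hS hSS, show S = _ from conjStarAlgAut_apply _ _,
    trace_mul_cycle, coe_star_mul_self, Matrix.one_mul, trace_diagonal, Complex.re_sum]
  simp

open Unitary in
lemma Matrix.IsHermitian.re_trace_mul_eq_sum {X : Matrix n n ℂ} (hX : X.IsHermitian)
    (P : Matrix n n ℂ) :
    (P * X).trace.re = ∑ i, ((star (hX.eigenvectorUnitary : Matrix n n ℂ) * P *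
      hX.eigenvectorUnitary) i i).re * hX.eigenvalues i := by
  conv_lhs => rw [hX.spectral_theorem, conjStarAlgAut_apply, ← Matrix.mul_assoc,
    ← Matrix.mul_assoc, trace_mul_cycle, ← Matrix.mul_assoc]
  simp [trace, mul_diagonal, Complex.re_sum]

lemma two_mul_re_trace_mul_le {X P : Matrix n n ℂ} (hX : X.IsHermitian)
    (hP : P.PosSemidef) (hP1 : (1 - P).PosSemidef) :
    2 * (P * X).trace.re ≤ traceNorm X + X.trace.re := by
  rw [hX.re_trace_mul_eq_sum, hX.traceNorm_eq_sum_abs_eigenvalues, hX.trace_eq_sum_eigenvalues,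
    Complex.re_sum, Finset.mul_sum, ← Finset.sum_add_distrib]
  set V : Matrix n n ℂ := ↑hX.eigenvectorUnitary
  have hVV : star V * V = 1 := Unitary.coe_star_mul_self _
  have ht0 : ∀ i, 0 ≤ ((star V * P * V) i i).re :=
    (hP.conjTranspose_mul_mul_same V).re_diag_nonneg
  have ht1 : ∀ i, ((star V * P * V) i i).re ≤ 1 := fun i => by
    have := (hP1.conjTranspose_mul_mul_same V).re_diag_nonneg i
    rw [Matrix.mul_sub, Matrix.sub_mul, Matrix.mul_one, ← star_eq_conjTranspose, hVV] at this
    simpa using this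
  refine Finset.sum_le_sum fun i _ => ?_
  change _ ≤ _ + hX.eigenvalues i
  rcases abs_cases (hX.eigenvalues i) with ⟨h_abs, h_nonneg⟩ | ⟨h_abs, h_neg⟩ <;>
    nlinarith [ht0 i, ht1 i]

end TraceNorm

section Channel

variable {W A B : Type*} [Fintype A]

lemma apply_eq_sum_apply_single [DecidableEq A] (Φ : Matrix A A ℂ →ₗ[ℂ] Matrix B B ℂ)
    (X : Matrix A A ℂ) (b b' : B) :
    Φ X b b' = ∑ i, ∑ j, X i j * Φ (single i j 1) b b' := by
  have hsingle (i j : A) : single i j (X i j) = X i j • single i j (1 : ℂ) := by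
    rw [smul_single, smul_eq_mul, mul_one]
  conv_lhs => rw [matrix_eq_sum_single X]
  simp only [hsingle, map_sum, LinearMap.map_smul, Matrix.sum_apply, Matrix.smul_apply,
    smul_eq_mul]

lemma map_conjTranspose_of_isHermitian_choiMat [DecidableEq A]
    {Φ : Matrix A A ℂ →ₗ[ℂ] Matrix B B ℂ} (hΦ : (choiMat Φ).IsHermitian) (X : Matrix A A ℂ) :
    Φ Xᴴ = (Φ X)ᴴ := by
  ext b b'
  have hchoi (i j : A) : star (Φ (single i j 1) b' b) = Φ (single j i 1) b b' :=
    hΦ.apply (j, b) (i, b')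
  rw [conjTranspose_apply, apply_eq_sum_apply_single, apply_eq_sum_apply_single, Finset.sum_comm]
  simp only [star_sum, star_mul', hchoi, conjTranspose_apply]

lemma applyRight_isHermitian [DecidableEq A] {Φ : Matrix A A ℂ →ₗ[ℂ] Matrix B B ℂ}
    (hΦ : (choiMat Φ).IsHermitian) {ρ : Matrix (W × A) (W × A) ℂ} (hρ : ρ.IsHermitian) :
    (applyRight Φ ρ).IsHermitian := by
  ext p q
  have hblock : (of fun u v => ρ (q.1, u) (p.1, v))ᴴ = of fun u v => ρ (p.1, u) (q.1, v) := by
    ext u v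
    exact hρ.apply _ _
  change star (Φ (of fun u v => ρ (q.1, u) (p.1, v)) q.2 p.2) = _
  rw [← conjTranspose_apply, ← map_conjTranspose_of_isHermitian_choiMat hΦ, hblock]
  rfl

lemma trace_applyRight [Fintype W] [Fintype B] {Φ : Matrix A A ℂ →ₗ[ℂ] Matrix B B ℂ}
    (hΦ : ∀ X, (Φ X).trace = X.trace) (ρ : Matrix (W × A) (W × A) ℂ) :
    (applyRight Φ ρ).trace = ρ.trace := by
  simp only [trace, diag, Fintype.sum_prod_type]
  exact Finset.sum_congr rfl fun w _ => hΦ (of fun u v => ρ (w, u) (w, v))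

end Channel

lemma applyRight_submatrix_prodMk {W A B : Type*} (Φ : Matrix A A ℂ →ₗ[ℂ] Matrix B B ℂ)
    (ρ : Matrix (W × A) (W × A) ℂ) (w : W) :
    (applyRight Φ ρ).submatrix (Prod.mk w) (Prod.mk w) =
      Φ (ρ.submatrix (Prod.mk w) (Prod.mk w)) :=
  rfl

/-- The product vector `|w⟩ ⊗ φ`, where `|w⟩` is a standard basis vector. -/
def tensorSingle {W B : Type*} [DecidableEq W] (w : W) (φ : B → ℂ) : W × B → ℂ :=
  fun q => if q.1 = w then φ q.2 else 0

section TensorSingle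

variable {W B : Type*} [DecidableEq W]

lemma star_tensorSingle (w : W) (φ : B → ℂ) :
    star (tensorSingle w φ) = tensorSingle w (star φ) := by
  ext q
  simp only [tensorSingle, Pi.star_apply, apply_ite star, star_zero]

variable [Fintype W] [Fintype B]

lemma dotProduct_tensorSingle (u : W × B → ℂ) (w : W) (φ : B → ℂ) :
    u ⬝ᵥ tensorSingle w φ = (fun b => u (w, b)) ⬝ᵥ φ := by
  simp [dotProduct, tensorSingle, Fintype.sum_prod_type]

lemma tensorSingle_dotProduct (w : W) (φ : B → ℂ) (u : W × B → ℂ) :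
    tensorSingle w φ ⬝ᵥ u = φ ⬝ᵥ fun b => u (w, b) := by
  rw [dotProduct_comm, dotProduct_tensorSingle, dotProduct_comm]

lemma star_tensorSingle_dotProduct_tensorSingle (w w' : W) (φ φ' : B → ℂ) :
    star (tensorSingle w φ) ⬝ᵥ tensorSingle w' φ' = if w = w' then star φ ⬝ᵥ φ' else 0 := by
  rw [star_tensorSingle, tensorSingle_dotProduct]
  split_ifs with h
  · subst h
    simp [tensorSingle]
  · simp [tensorSingle, h]

lemma star_tensorSingle_dotProduct_mulVec (M : Matrix (W × B) (W × B) ℂ) (w : W) (φ : B → ℂ) :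
    star (tensorSingle w φ) ⬝ᵥ M *ᵥ tensorSingle w φ =
      star φ ⬝ᵥ M.submatrix (Prod.mk w) (Prod.mk w) *ᵥ φ := by
  rw [star_tensorSingle, tensorSingle_dotProduct]
  congr 1
  ext b
  exact dotProduct_tensorSingle _ w φ

end TensorSingle

/-- `∑ₘ √pₘ |m⟩|m⟩ ⊗ φₘ`, the common shape of `sigmaVec` and `decVec`. -/
def purifiedVec {W Q : Type*} [DecidableEq W] (p : W → ℝ) (φ : W → Q → ℂ) :
    (W × W) × Q → ℂ :=
  fun x => (if x.1.1 = x.1.2 then (Real.sqrt (p x.1.2) : ℂ) else 0) * φ x.1.2 x.2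

lemma purifiedVec_apply_self {W Q : Type*} [DecidableEq W] (p : W → ℝ) (φ : W → Q → ℂ) (m : W)
    (q : Q) :
    purifiedVec p φ ((m, m), q) = (Real.sqrt (p m) : ℂ) * φ m q := by
  rw [purifiedVec, if_pos rfl]

section Purification

variable {W Q : Type*} [Fintype W] [Fintype Q] [DecidableEq W]

lemma star_purifiedVec_dotProduct_self {p : W → ℝ} (hp0 : ∀ m, 0 ≤ p m) (hp1 : ∑ m, p m = 1)
    {φ : W → Q → ℂ} (hφ : ∀ m, star (φ m) ⬝ᵥ φ m = 1) :
    star (purifiedVec p φ) ⬝ᵥ purifiedVec p φ = 1 := by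
  have hcoeff (x : W × W) (q : Q) :
      star (purifiedVec p φ (x, q)) * purifiedVec p φ (x, q) =
        if x.1 = x.2 then (p x.2 : ℂ) * (star (φ x.2 q) * φ x.2 q) else 0 := by
    unfold purifiedVec
    split_ifs
    · rw [star_mul', Complex.star_def, Complex.conj_ofReal, mul_mul_mul_comm,
        ← Complex.ofReal_mul, Real.mul_self_sqrt (hp0 _)]
    · simp
  simp only [dotProduct, Pi.star_apply, Fintype.sum_prod_type, hcoeff]
  simp only [Finset.sum_ite_irrel, Finset.sum_const_zero, ← Finset.mul_sum, Finset.sum_ite_eq,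
    Finset.mem_univ, if_true]
  have hφ_sum (m : W) : ∑ q, star (φ m q) * φ m q = 1 := hφ m
  simp only [hφ_sum, mul_one]
  exact_mod_cast hp1

lemma star_tensorSingle_dotProduct_purifiedVec (p : W → ℝ) (φ : W → Q → ℂ) (m : W)
    (χ : Q → ℂ) :
    star (tensorSingle (m, m) χ) ⬝ᵥ purifiedVec p φ = (Real.sqrt (p m) : ℂ) * (star χ ⬝ᵥ φ m) := by
  rw [star_tensorSingle, tensorSingle_dotProduct, ← smul_eq_mul, ← dotProduct_smul]
  simp only [purifiedVec_apply_self]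
  rfl

end Purification

section DecodingSetup

variable {dM dC dD dE dE' : ℕ}

lemma msgVec_apply (ψ : Fin dM → Fin dM → ℂ) (ω : Fin dE × Fin dE' → ℂ)
    (U : Matrix (Fin dC × Fin dD) (Fin dM × Fin dE) ℂ) (m : Fin dM) (x : Fin dC × Fin dD)
    (f : Fin dE') :
    msgVec dM dC dD dE dE' ψ ω U m (x, f) = (U *ᵥ fun b => ψ m b.1 * ω (b.2, f)) x := by
  simp [msgVec, mulVec, dotProduct, Fintype.sum_prod_type, mul_assoc]

lemma star_msgVec_dotProduct_self {ψ : Fin dM → Fin dM → ℂ} {m : Fin dM}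
    (hψ : star (ψ m) ⬝ᵥ ψ m = 1) {ω : Fin dE × Fin dE' → ℂ} (hω : star ω ⬝ᵥ ω = 1)
    {U : Matrix (Fin dC × Fin dD) (Fin dM × Fin dE) ℂ} (hU : Uᴴ * U = 1) :
    star (msgVec dM dC dD dE dE' ψ ω U m) ⬝ᵥ msgVec dM dC dD dE dE' ψ ω U m = 1 := by
  set u : Fin dE' → Fin dM × Fin dE → ℂ := fun f b => ψ m b.1 * ω (b.2, f)
  calc _ = ∑ f, star (U *ᵥ u f) ⬝ᵥ U *ᵥ u f := by
        rw [dotProduct, Fintype.sum_prod_type, Finset.sum_comm]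
        simp only [Pi.star_apply, msgVec_apply, dotProduct]
        rfl
    _ = ∑ f, star (u f) ⬝ᵥ u f := by simp only [star_mulVec_dotProduct_mulVec hU]
    _ = (star (ψ m) ⬝ᵥ ψ m) * (star ω ⬝ᵥ ω) := by
        simp only [u, dotProduct, Fintype.sum_prod_type, Pi.star_apply, Finset.sum_mul,
          Finset.mul_sum, star_mul']
        conv_rhs => rw [Finset.sum_comm]
        refine Finset.sum_congr rfl fun f _ => ?_
        rw [Finset.sum_comm]
        exact Finset.sum_congr rfl fun e _ => Finset.sum_congr rfl fun n _ => by ring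
    _ = 1 := by rw [hψ, hω, one_mul]

variable (p : Fin dM → ℝ) (ψ : Fin dM → Fin dM → ℂ) (ω : Fin dE × Fin dE' → ℂ)
  (U : Matrix (Fin dC × Fin dD) (Fin dM × Fin dE) ℂ)

lemma decVec_eq_purifiedVec :
    decVec dM dC dD dE dE' p ψ ω U = purifiedVec p (msgVec dM dC dD dE dE' ψ ω U) :=
  rfl

lemma sigmaVec_eq_purifiedVec : sigmaVec dM p ψ = purifiedVec p ψ :=
  rfl

lemma tauRMCE'_isHermitian : (tauRMCE' dM dC dD dE dE' p ψ ω U).IsHermitian := by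
  ext x y
  simp only [tauRMCE', conjTranspose_apply, of_apply, star_sum, star_mul', star_star]
  exact Finset.sum_congr rfl fun d _ => mul_comm _ _

lemma trace_tauRMCE' :
    (tauRMCE' dM dC dD dE dE' p ψ ω U).trace =
      star (decVec dM dC dD dE dE' p ψ ω U) ⬝ᵥ decVec dM dC dD dE dE' p ψ ω U := by
  simp only [trace, diag, tauRMCE', of_apply, dotProduct, Fintype.sum_prod_type, Pi.star_apply]
  refine Finset.sum_congr rfl fun _ _ => Finset.sum_congr rfl fun _ _ =>
    Finset.sum_congr rfl fun _ _ => ?_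
  rw [Finset.sum_comm]
  exact Finset.sum_congr rfl fun _ _ => Finset.sum_congr rfl fun _ _ => mul_comm _ _

lemma tauRMCE'_submatrix_prodMk_self {m : Fin dM} (hp0 : 0 ≤ p m) :
    (tauRMCE' dM dC dD dE dE' p ψ ω U).submatrix (Prod.mk (m, m)) (Prod.mk (m, m)) =
      (p m : ℂ) • msgCE' dM dC dD dE dE' ψ ω U m := by
  ext u w
  simp only [submatrix_apply, tauRMCE', msgCE', of_apply, Matrix.smul_apply, smul_eq_mul,
    Finset.mul_sum, decVec_eq_purifiedVec]
  refine Finset.sum_congr rfl fun d _ => ?_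
  rw [purifiedVec_apply_self, purifiedVec_apply_self, star_mul', Complex.star_def,
    Complex.conj_ofReal, mul_mul_mul_comm, ← Complex.ofReal_mul, Real.mul_self_sqrt hp0]

lemma star_tensorSingle_dotProduct_applyRight_tauRMCE'_mulVec
    (𝓓 : Matrix (Fin dC × Fin dE') (Fin dC × Fin dE') ℂ →ₗ[ℂ] Matrix (Fin dM) (Fin dM) ℂ)
    {m : Fin dM} (hp0 : 0 ≤ p m) (χ : Fin dM → ℂ) :
    star (tensorSingle (m, m) χ) ⬝ᵥ
        applyRight 𝓓 (tauRMCE' dM dC dD dE dE' p ψ ω U) *ᵥ tensorSingle (m, m) χ =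
      p m * (star χ ⬝ᵥ 𝓓 (msgCE' dM dC dD dE dE' ψ ω U m) *ᵥ χ) := by
  rw [star_tensorSingle_dotProduct_mulVec, applyRight_submatrix_prodMk,
    tauRMCE'_submatrix_prodMk_self p ψ ω U hp0, LinearMap.map_smul, smul_mulVec,
    dotProduct_smul, smul_eq_mul]

/-- The probability `p(m'|m) = ⟨ψ_{m'}| 𝓓(τ_m) |ψ_{m'}⟩` of decoding message `m` as `m'`. -/
def decodingProb
    (𝓓 : Matrix (Fin dC × Fin dE') (Fin dC × Fin dE') ℂ →ₗ[ℂ] Matrix (Fin dM) (Fin dM) ℂ)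
    (m m' : Fin dM) : ℝ :=
  (star (ψ m') ⬝ᵥ 𝓓 (msgCE' dM dC dD dE dE' ψ ω U m) *ᵥ ψ m').re

lemma decodingProb_eq_re_sum
    (𝓓 : Matrix (Fin dC × Fin dE') (Fin dC × Fin dE') ℂ →ₗ[ℂ] Matrix (Fin dM) (Fin dM) ℂ)
    (m m' : Fin dM) :
    decodingProb ψ ω U 𝓓 m m' =
      (∑ n, ∑ n', star (ψ m' n) * 𝓓 (msgCE' dM dC dD dE dE' ψ ω U m) n n' * ψ m' n').re := by
  simp only [decodingProb, dotProduct, mulVec, Pi.star_apply, Finset.mul_sum, mul_assoc]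

end DecodingSetup

theorem sum_mul_sum_decodingProb_le_traceNorm_div_two {dM dC dD dE dE' : ℕ}
    {p : Fin dM → ℝ} (hp0 : ∀ m, 0 ≤ p m) (hp1 : ∑ m, p m = 1)
    {ψ : Fin dM → Fin dM → ℂ} (hψ : ∀ m m', star (ψ m) ⬝ᵥ ψ m' = if m = m' then 1 else 0)
    {ω : Fin dE × Fin dE' → ℂ} (hω : star ω ⬝ᵥ ω = 1)
    {U : Matrix (Fin dC × Fin dD) (Fin dM × Fin dE) ℂ} (hU : Uᴴ * U = 1)
    {𝓓 : Matrix (Fin dC × Fin dE') (Fin dC × Fin dE') ℂ →ₗ[ℂ] Matrix (Fin dM) (Fin dM) ℂ}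
    (h𝓓 : IsCPTP 𝓓) :
    ∑ m, p m * ∑ m' ∈ Finset.univ.filter (· ≠ m), decodingProb ψ ω U 𝓓 m m' ≤
      traceNorm
        (applyRight 𝓓 (tauRMCE' dM dC dD dE dE' p ψ ω U) - outer (sigmaVec dM p ψ)) / 2 := by
  set Y := applyRight 𝓓 (tauRMCE' dM dC dD dE dE' p ψ ω U) - outer (sigmaVec dM p ψ)
  have hψ1 (m : Fin dM) : star (ψ m) ⬝ᵥ ψ m = 1 := by rw [hψ, if_pos rfl]
  have hY : Y.IsHermitian :=
    (applyRight_isHermitian h𝓓.1.1 (tauRMCE'_isHermitian p ψ ω U)).sub (outer_posSemidef _).1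
  have hYtr : Y.trace = 0 := by
    rw [trace_sub, trace_applyRight h𝓓.2, trace_tauRMCE', decVec_eq_purifiedVec,
      star_purifiedVec_dotProduct_self hp0 hp1 fun m => star_msgVec_dotProduct_self (hψ1 m) hω hU,
      outer_eq_vecMulVec, trace_vecMulVec, dotProduct_comm, sigmaVec_eq_purifiedVec,
      star_purifiedVec_dotProduct_self hp0 hp1 hψ1, sub_self]
  set v : Fin dM × Fin dM → (Fin dM × Fin dM) × Fin dM → ℂ :=
    fun i => tensorSingle (i.1, i.1) (ψ i.2)
  set s := Finset.univ.filter fun i : Fin dM × Fin dM => i.2 ≠ i.1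
  have hv (i j : Fin dM × Fin dM) : star (v i) ⬝ᵥ v j = if i = j then 1 else 0 := by
    simp only [v, star_tensorSingle_dotProduct_tensorSingle, hψ, Prod.ext_iff]
    split_ifs <;> tauto
  have hP := posSemidef_sum s fun i _ => outer_posSemidef (v i)
  have hP1 :=
    posSemidef_one_sub_of_mul_self_eq hP.1 (sum_outer_mul_self s v fun i _ j _ => hv i j)
  have hPY : ((∑ i ∈ s, outer (v i)) * Y).trace.re =
      ∑ i ∈ s, p i.1 * decodingProb ψ ω U 𝓓 i.1 i.2 := by
    rw [Finset.sum_mul, trace_sum, Complex.re_sum]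
    refine Finset.sum_congr rfl fun i hi => ?_
    rw [trace_outer_mul, sub_mulVec, dotProduct_sub, star_dotProduct_outer_mulVec,
      star_tensorSingle_dotProduct_applyRight_tauRMCE'_mulVec _ _ _ _ _ (hp0 _),
      sigmaVec_eq_purifiedVec, star_tensorSingle_dotProduct_purifiedVec, hψ,
      if_neg (Finset.mem_filter.mp hi).2, mul_zero, zero_mul, sub_zero, Complex.re_ofReal_mul,
      decodingProb]
  have hbound := two_mul_re_trace_mul_le hY hP hP1
  rw [hYtr, hPY, Complex.zero_re, add_zero] at hbound
  calc _ = ∑ i ∈ s, p i.1 * decodingProb ψ ω U 𝓓 i.1 i.2 := by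
        rw [Finset.sum_filter, Fintype.sum_prod_type]
        simp_rw [Finset.mul_sum, Finset.sum_filter]
    _ ≤ _ := by linarith

theorem decoding_implies_small_error_probability_general
    (dM dC dD dE dE' : ℕ)
    (p : Fin dM → ℝ) (hp0 : ∀ m, 0 ≤ p m) (hp1 : ∑ m, p m = 1)
    (hunif : ∀ m, p m = 1 / (dM : ℝ))
    (ψ : Fin dM → Fin dM → ℂ)
    (hψ : ∀ m m', ∑ n, star (ψ m n) * ψ m' n = if m = m' then 1 else 0)
    (ω : Fin dE × Fin dE' → ℂ) (hω : ∑ q, Complex.normSq (ω q) = 1)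
    (U : Matrix (Fin dC × Fin dD) (Fin dM × Fin dE) ℂ)
    (hU : Uᴴ * U = 1 ∧ U * Uᴴ = 1)
    (𝓓 : Matrix (Fin dC × Fin dE') (Fin dC × Fin dE') ℂ →ₗ[ℂ] Matrix (Fin dM) (Fin dM) ℂ)
    (h𝓓 : IsCPTP 𝓓)
    (δ : ℝ)
    (hdec : traceNorm (applyRight 𝓓 (tauRMCE' dM dC dD dE dE' p ψ ω U)
        - outer (sigmaVec dM p ψ)) ≤ δ) :
    (1 / (dM : ℝ)) * ∑ m : Fin dM, ∑ m' ∈ Finset.univ.filter (fun m' : Fin dM => m' ≠ m),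
        (∑ n, ∑ n', star (ψ m' n) * 𝓓 (msgCE' dM dC dD dE dE' ψ ω U m) n n' * ψ m' n').re
      ≤ δ / 2 := by
  have hω' : star ω ⬝ᵥ ω = 1 := by
    rw [star_dotProduct_self_eq_sum_normSq]
    exact_mod_cast hω
  have herr := sum_mul_sum_decodingProb_le_traceNorm_div_two hp0 hp1 hψ hω' hU.1 h𝓓
  simp only [hunif] at herr
  simp only [Finset.mul_sum, ← decodingProb_eq_re_sum] at herr ⊢
  linarith

/-- Decoding the purified message implies a small average error probability for
decoding the classical message (Section `sec:how-to-lock`). -/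
theorem decoding_implies_small_error_probability
    (dM dC dD dE dE' : ℕ) (hdim : dM * dE = dC * dD)
    (p : Fin dM → ℝ) (hp0 : ∀ m, 0 ≤ p m) (hp1 : ∑ m, p m = 1)
    (hunif : ∀ m, p m = 1 / (dM : ℝ))
    (ψ : Fin dM → Fin dM → ℂ)
    (hψ : ∀ m m', ∑ n, star (ψ m n) * ψ m' n = if m = m' then 1 else 0)
    (ω : Fin dE × Fin dE' → ℂ) (hω : ∑ q, Complex.normSq (ω q) = 1)
    (U : Matrix (Fin dC × Fin dD) (Fin dM × Fin dE) ℂ)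
    (hU : Uᴴ * U = 1 ∧ U * Uᴴ = 1)
    (𝓓 : Matrix (Fin dC × Fin dE') (Fin dC × Fin dE') ℂ →ₗ[ℂ] Matrix (Fin dM) (Fin dM) ℂ)
    (h𝓓 : IsCPTP 𝓓)
    (δ : ℝ) (hδ0 : 0 ≤ δ)
    (hdec : traceNorm (applyRight 𝓓 (tauRMCE' dM dC dD dE dE' p ψ ω U)
        - outer (sigmaVec dM p ψ)) ≤ δ) :
    (1 / (dM : ℝ)) * ∑ m : Fin dM, ∑ m' ∈ Finset.univ.filter (fun m' : Fin dM => m' ≠ m),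
        (∑ n, ∑ n', star (ψ m' n) * 𝓓 (msgCE' dM dC dD dE dE' ψ ω U m) n n' * ψ m' n').re
      ≤ δ / 2 :=
  decoding_implies_small_error_probability_general dM dC dD dE dE' p hp0 hp1 hunif ψ hψ ω hω U hU 𝓓
    h𝓓 δ hdec
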